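/- arXiv:1807.05862 — 4 statements merged into one kernel-verified Lean document; each statement's English description precedes it below -/
import Mathlib

section
/- Every feasible flow over time in a flow network with spillback satisfies, for every arc e and all times θ ≥ 0: (1) the outflow capacity condition f⁻_e(θ) ≤ ν⁻_e; (2) the non-deficit condition z_e(θ) ≥ 0; and (3) the storage condition d_e(θ) ≤ σ_e. -/
open MeasureTheory Finset
open scoped Classical

noncomputable section

/-- A flow network with spillback: a finite directed (multi-)graph with source `s`,
sink `t`, transit times `τ`, outflow capacities `νout`, inflow capacities `νin`,
storage capacities `σ` (possibly infinite) and network inflow rate `r`. -/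
structure SpillbackNetwork (V E : Type) [Fintype V] [Fintype E] where
  tail : E → V
  head : E → V
  s : V
  t : V
  τ : E → ℝ
  νout : E → ℝ
  νin : E → ℝ
  σ : E → EReal
  r : ℝ
  τ_nonneg : ∀ e, 0 ≤ τ e
  νout_pos : ∀ e, 0 < νout e
  νin_pos : ∀ e, 0 < νin e
  σ_gt : ∀ e, ((νin e * τ e : ℝ) : EReal) < σ e
  r_nonneg : 0 ≤ r
  reachable : ∀ v, Relation.ReflTransGen (fun a b => ∃ e, tail e = a ∧ head e = b) s v
  no_zero_cycle : ∀ (l : List E) (hl : l ≠ []),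
    l.Chain' (fun e e' => head e = tail e') →
    head (l.getLast hl) = tail (l.head hl) → 0 < (l.map τ).sum
  no_into_source : ∀ e, head e ≠ s
  source_storage : ∀ e, tail e = s → σ e = ⊤
  source_inflow : ∀ e, tail e = s → r < νin e

namespace SpillbackNetwork

variable {V E : Type} [Fintype V] [Fintype E]

/-- A flow over time: in- and outflow rate functions, nonnegative, vanishing on
negative times, bounded and locally integrable. -/
structure Flow (N : SpillbackNetwork V E) where
  fin : E → ℝ → ℝ
  fout : E → ℝ → ℝ
  fin_nonneg : ∀ e θ, 0 ≤ fin e θ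
  fout_nonneg : ∀ e θ, 0 ≤ fout e θ
  fin_zero_neg : ∀ e θ, θ < 0 → fin e θ = 0
  fout_zero_neg : ∀ e θ, θ < 0 → fout e θ = 0
  fin_bdd : ∀ e, ∃ M, ∀ θ, fin e θ ≤ M
  fout_bdd : ∀ e, ∃ M, ∀ θ, fout e θ ≤ M
  fin_li : ∀ e, LocallyIntegrable (fin e)
  fout_li : ∀ e, LocallyIntegrable (fout e)

variable {N : SpillbackNetwork V E}

/-- Flow conservation at every node `v ≠ t`, for the network-inflow rate function `R`. -/
def Flow.Conserves (f : N.Flow) (R : ℝ → ℝ) : Prop :=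
  ∀ v, v ≠ N.t → ∀ θ : ℝ, 0 ≤ θ →
    (∑ e ∈ univ.filter fun e => N.tail e = v, f.fin e θ)
      - (∑ e ∈ univ.filter fun e => N.head e = v, f.fout e θ)
      = if v = N.s then R θ else 0

/-- Cumulative inflow `F⁺`. -/
def Flow.Fplus (f : N.Flow) (e : E) (θ : ℝ) : ℝ := ∫ ξ in (0:ℝ)..θ, f.fin e ξ

/-- Cumulative outflow `F⁻`. -/
def Flow.Fminus (f : N.Flow) (e : E) (θ : ℝ) : ℝ := ∫ ξ in (0:ℝ)..θ, f.fout e ξ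

/-- The queue `z_e(θ) = F⁺_e(θ - τ_e) - F⁻_e(θ)`. -/
def Flow.z (f : N.Flow) (e : E) (θ : ℝ) : ℝ := f.Fplus e (θ - N.τ e) - f.Fminus e θ

/-- The arc load `d_e(θ) = F⁺_e(θ) - F⁻_e(θ)`. -/
def Flow.d (f : N.Flow) (e : E) (θ : ℝ) : ℝ := f.Fplus e θ - f.Fminus e θ

/-- The arc `e` is full at time `θ` if `d_e(θ) ≥ σ_e`. -/
def Flow.Full (f : N.Flow) (e : E) (θ : ℝ) : Prop := N.σ e ≤ (f.d e θ : EReal)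

/-- The inflow bound `b⁺_e(θ)`. -/
def Flow.bplus (f : N.Flow) (e : E) (θ : ℝ) : ℝ :=
  if f.Full e θ then min (f.fout e θ) (N.νin e) else N.νin e

/-- The push rate `b⁻_e(θ)`. -/
def Flow.bminus (f : N.Flow) (e : E) (θ : ℝ) : ℝ :=
  if θ < N.τ e then 0
  else if 0 < f.z e θ then N.νout e
  else min (f.fin e (θ - N.τ e)) (N.νout e)

/-- The arc `e` is throttled at time `θ` if `f⁻_e(θ) < b⁻_e(θ)`. -/
def Flow.Throttled (f : N.Flow) (e : E) (θ : ℝ) : Prop := f.fout e θ < f.bminus e θ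

/-- A set of arcs contains no directed cycle. -/
def CycleFree (N : SpillbackNetwork V E) (S : Set E) : Prop :=
  ∀ (l : List E) (hl : l ≠ []), (∀ e ∈ l, e ∈ S) →
    l.Chain' (fun e e' => N.head e = N.tail e') →
    N.head (l.getLast hl) ≠ N.tail (l.head hl)

/-- Feasibility: the inflow condition, the fair allocation condition, the no slack
condition and the no deadlock condition. -/
def Flow.Feasible (f : N.Flow) : Prop :=
  (∀ e θ, f.fin e θ ≤ f.bplus e θ) ∧
  (∀ v (θ : ℝ), ∃ c, c ∈ Set.Ioc (0:ℝ) 1 ∧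
    ∀ e, N.head e = v → f.fout e θ = min (f.bminus e θ) (N.νout e * c)) ∧
  (∀ v (θ : ℝ), (∃ e, N.head e = v ∧ f.Throttled e θ) →
    ∃ e, N.tail e = v ∧ f.fin e θ = f.bplus e θ) ∧
  (∀ θ : ℝ, N.CycleFree {e | f.Full e θ})

/-- The spillback factor: the maximal value in `(0,1]` witnessing fair allocation. -/
def Flow.spillFactor (f : N.Flow) (v : V) (θ : ℝ) : ℝ :=
  sSup {c : ℝ | c ∈ Set.Ioc (0:ℝ) 1 ∧
    ∀ e, N.head e = v → f.fout e θ = min (f.bminus e θ) (N.νout e * c)}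

/-- The waiting time `q_e(θ)`. -/
def Flow.q (f : N.Flow) (e : E) (θ : ℝ) : ℝ :=
  sInf {q : ℝ | 0 ≤ q ∧
    (∫ ξ in (θ + N.τ e)..(θ + N.τ e + q), f.fout e ξ) = f.z e (θ + N.τ e)}

/-- The exit time `T_e(θ) = θ + τ_e + q_e(θ)`. -/
def Flow.T (f : N.Flow) (e : E) (θ : ℝ) : ℝ := θ + N.τ e + f.q e θ

/-- `IsWalk N u v l` : the list of arcs `l` is a walk from `u` to `v`. -/
def IsWalk (N : SpillbackNetwork V E) : V → V → List E → Prop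
  | u, v, [] => u = v
  | u, v, e :: l => N.tail e = u ∧ N.IsWalk (N.head e) v l

/-- Traversal time of a walk: composition of the exit times along the walk. -/
def Flow.TWalk (f : N.Flow) (l : List E) (θ : ℝ) : ℝ :=
  l.foldl (fun ϑ e => f.T e ϑ) θ

/-- Earliest arrival time `ℓ_v(θ)`: minimum of the traversal times over all `s`-`v` walks. -/
def Flow.ell (f : N.Flow) (v : V) (θ : ℝ) : ℝ :=
  sInf {x : ℝ | ∃ l : List E, N.IsWalk N.s v l ∧ f.TWalk l θ = x}

/-- `e` is active at `θ` (i.e. `e ∈ E'_θ`). -/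
def Flow.Active (f : N.Flow) (e : E) (θ : ℝ) : Prop :=
  f.ell (N.head e) θ = f.T e (f.ell (N.tail e) θ)

/-- `e` is a resetting arc at `θ` (i.e. `e ∈ E*_θ`). -/
def Flow.Resetting (f : N.Flow) (e : E) (θ : ℝ) : Prop :=
  0 < f.q e (f.ell (N.tail e) θ)

/-- `e` is a spillback arc at `θ` (i.e. `e ∈ Ē_θ`). -/
def Flow.Spillback (f : N.Flow) (e : E) (θ : ℝ) : Prop :=
  (f.d e (f.ell (N.tail e) θ) : EReal) = N.σ e

/-- The Nash flow condition: almost all flow entering an arc does so along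
currently shortest paths. -/
def Flow.NashCondition (f : N.Flow) : Prop :=
  ∀ᵐ θ ∂(volume : Measure ℝ), 0 ≤ θ → ∀ e, 0 < f.fin e θ →
    ∃ ϑ, 0 ≤ ϑ ∧ f.Active e ϑ ∧ f.ell (N.tail e) ϑ = θ

/-- A Nash flow over time: a feasible flow over time (with constant network inflow
rate `r`) satisfying the Nash flow condition. -/
def Flow.IsNash (f : N.Flow) : Prop :=
  f.Conserves (fun _ => N.r) ∧ f.Feasible ∧ f.NashCondition

/-- Spillback thin flow of value `r` on the subnetwork `E'` with resetting arcs
`Estar` and inflow bounds `b`. -/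
def ThinFlow (N : SpillbackNetwork V E) (E' Estar : Set E) (b : E → ℝ)
    (x : E → ℝ) (ℓ c : V → ℝ) : Prop :=
  (∀ e ∈ E', 0 ≤ x e) ∧
  (∀ v, (∑ e ∈ univ.filter fun e => N.tail e = v ∧ e ∈ E', x e)
      - (∑ e ∈ univ.filter fun e => N.head e = v ∧ e ∈ E', x e)
      = if v = N.s then N.r else if v = N.t then -N.r else 0) ∧
  (∀ v, 0 ≤ ℓ v) ∧
  (∀ v, c v ∈ Set.Ioc (0:ℝ) 1) ∧
  (ℓ N.s = 1 / c N.s) ∧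
  (∀ v, v ≠ N.s →
    (∀ e ∈ E', N.head e = v →
      ℓ v ≤ (if e ∈ Estar then x e / (c v * N.νout e)
             else max (ℓ (N.tail e)) (x e / (c v * N.νout e)))) ∧
    (∃ e ∈ E', N.head e = v ∧
      ℓ v = (if e ∈ Estar then x e / (c v * N.νout e)
             else max (ℓ (N.tail e)) (x e / (c v * N.νout e))))) ∧
  (∀ e ∈ E', 0 < x e →
    ℓ (N.head e) = (if e ∈ Estar then x e / (c (N.head e) * N.νout e)
                    else max (ℓ (N.tail e)) (x e / (c (N.head e) * N.νout e)))) ∧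
  (∀ e ∈ E', x e / b e ≤ ℓ (N.tail e)) ∧
  (∀ v, c v < 1 → ∃ e ∈ E', N.tail e = v ∧ ℓ v = x e / b e)

end SpillbackNetwork

end

namespace SpillbackNetwork

private lemma li_ii {g : ℝ → ℝ} (hg : MeasureTheory.LocallyIntegrable g) (a b : ℝ) :
    IntervalIntegrable g MeasureTheory.volume a b :=
  ⟨(hg.integrableOn_isCompact isCompact_Icc).mono_set Set.Ioc_subset_Icc_self,
   (hg.integrableOn_isCompact isCompact_Icc).mono_set Set.Ioc_subset_Icc_self⟩

private lemma integral_mono_Ioo {g h : ℝ → ℝ} {a b : ℝ} (hab : a ≤ b)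
    (hg : IntervalIntegrable g MeasureTheory.volume a b)
    (hh : IntervalIntegrable h MeasureTheory.volume a b)
    (hpt : ∀ x ∈ Set.Ioo a b, g x ≤ h x) :
    (∫ x in a..b, g x) ≤ ∫ x in a..b, h x := by
  rw [intervalIntegral.integral_of_le hab, intervalIntegral.integral_of_le hab,
    MeasureTheory.integral_Ioc_eq_integral_Ioo, MeasureTheory.integral_Ioc_eq_integral_Ioo]
  exact MeasureTheory.setIntegral_mono_on
    (hg.1.mono_set Set.Ioo_subset_Ioc_self) (hh.1.mono_set Set.Ioo_subset_Ioc_self)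
    measurableSet_Ioo hpt

private lemma integral_zero_Ioo {g : ℝ → ℝ} {a b : ℝ} (hab : a ≤ b)
    (hg : IntervalIntegrable g MeasureTheory.volume a b)
    (hpt : ∀ x ∈ Set.Ioo a b, g x = 0) : (∫ x in a..b, g x) = 0 := by
  have h1 := integral_mono_Ioo hab hg intervalIntegrable_const
    (h := fun _ => (0:ℝ)) (fun x hx => le_of_eq (hpt x hx))
  have h2 := integral_mono_Ioo hab intervalIntegrable_const hg
    (g := fun _ => (0:ℝ)) (fun x hx => ge_of_eq (hpt x hx))
  simp only [intervalIntegral.integral_const, smul_zero] at h1 h2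
  linarith

private lemma no_downcross {G : ℝ → ℝ} (hG : Continuous G) {lo : ℝ} (h0 : 0 ≤ G lo)
    (hinc : ∀ a b, lo ≤ a → a ≤ b → (∀ x ∈ Set.Ioo a b, G x < 0) → G a ≤ G b)
    {θ : ℝ} (hθ : lo ≤ θ) : 0 ≤ G θ := by
  by_contra hneg
  push_neg at hneg
  set S : Set ℝ := Set.Icc lo θ ∩ G ⁻¹' Set.Ici 0 with hS
  have hSne : S.Nonempty := ⟨lo, ⟨le_refl _, hθ⟩, h0⟩
  have hScomp : IsCompact S := isCompact_Icc.inter_right (isClosed_Ici.preimage hG)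
  have hmem : sSup S ∈ S := hScomp.sSup_mem hSne
  set a := sSup S with ha
  obtain ⟨⟨hla, haθ⟩, hGa⟩ := hmem
  have hGa' : 0 ≤ G a := hGa
  have hib : ∀ x ∈ Set.Ioo a θ, G x < 0 := by
    intro x hx
    by_contra hx0
    push_neg at hx0
    have hxS : x ∈ S := ⟨⟨hla.trans hx.1.le, hx.2.le⟩, hx0⟩
    exact absurd (le_csSup hScomp.bddAbove hxS) (not_le.mpr hx.1)
  have := hinc a θ hla haθ hib
  linarith

/-- **Additional conditions of feasible flows.** Every feasible flow over time
satisfies, for every arc `e` and all `θ ≥ 0`: the outflow capacity condition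
`f⁻_e(θ) ≤ ν⁻_e`, the non-deficit condition `z_e(θ) ≥ 0`, and the storage
condition `d_e(θ) ≤ σ_e`. -/
theorem feasible_additional_conditions
    {V E : Type} [Fintype V] [Fintype E] {N : SpillbackNetwork V E}
    (f : N.Flow) (hcons : f.Conserves fun _ => N.r) (hfeas : f.Feasible)
    (e : E) (θ : ℝ) (hθ : 0 ≤ θ) :
    f.fout e θ ≤ N.νout e ∧ 0 ≤ f.z e θ ∧ (f.d e θ : EReal) ≤ N.σ e := by
  obtain ⟨hin, hfair, -, -⟩ := hfeas
  -- basic facts about fout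
  have hout_le : ∀ ξ : ℝ, f.fout e ξ ≤ f.bminus e ξ ∧ f.fout e ξ ≤ N.νout e := by
    intro ξ
    obtain ⟨c, ⟨hc0, hc1⟩, hcall⟩ := hfair (N.head e) ξ
    have h := hcall e rfl
    constructor
    · rw [h]; exact min_le_left _ _
    · rw [h]
      calc min (f.bminus e ξ) (N.νout e * c) ≤ N.νout e * c := min_le_right _ _
        _ ≤ N.νout e * 1 := by
            exact mul_le_mul_of_nonneg_left hc1 (N.νout_pos e).le
        _ = N.νout e := mul_one _
  have hout0 : ∀ ξ : ℝ, ξ < N.τ e → f.fout e ξ = 0 := by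
    intro ξ hξ
    obtain ⟨c, ⟨hc0, hc1⟩, hcall⟩ := hfair (N.head e) ξ
    have h := hcall e rfl
    rw [Flow.bminus, if_pos hξ] at h
    rw [h, min_eq_left (le_of_lt (mul_pos (N.νout_pos e) hc0))]
  -- continuity
  have hFp : Continuous (f.Fplus e) :=
    intervalIntegral.continuous_primitive (fun a b => li_ii (f.fin_li e) a b) 0
  have hFm : Continuous (f.Fminus e) :=
    intervalIntegral.continuous_primitive (fun a b => li_ii (f.fout_li e) a b) 0
  -- vanishing of primitives
  have hFp0 : ∀ ϑ : ℝ, ϑ ≤ 0 → f.Fplus e ϑ = 0 := by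
    intro ϑ hϑ
    rw [Flow.Fplus, intervalIntegral.integral_symm,
      integral_zero_Ioo hϑ (li_ii (f.fin_li e) ϑ 0)
        (fun x hx => f.fin_zero_neg e x hx.2), neg_zero]
  have hFm0 : ∀ ϑ : ℝ, ϑ ≤ N.τ e → f.Fminus e ϑ = 0 := by
    intro ϑ hϑ
    rcases le_or_gt 0 ϑ with h0 | h0
    · rw [Flow.Fminus]
      exact integral_zero_Ioo h0 (li_ii (f.fout_li e) 0 ϑ)
        (fun x hx => hout0 x (lt_of_lt_of_le hx.2 hϑ))
    · rw [Flow.Fminus, intervalIntegral.integral_symm,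
        integral_zero_Ioo h0.le (li_ii (f.fout_li e) ϑ 0)
          (fun x hx => hout0 x (lt_of_lt_of_le hx.2 (N.τ_nonneg e))),
        neg_zero]
  -- increments of primitives
  have hFp_sub : ∀ a b : ℝ, f.Fplus e (b - N.τ e) - f.Fplus e (a - N.τ e)
      = ∫ x in a..b, f.fin e (x - N.τ e) := by
    intro a b
    rw [Flow.Fplus, Flow.Fplus,
      intervalIntegral.integral_interval_sub_left
        (li_ii (f.fin_li e) 0 (b - N.τ e)) (li_ii (f.fin_li e) 0 (a - N.τ e)),
      intervalIntegral.integral_comp_sub_right (fun x => f.fin e x) (N.τ e)]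
  have hFm_sub : ∀ a b : ℝ, f.Fminus e b - f.Fminus e a = ∫ x in a..b, f.fout e x := by
    intro a b
    rw [Flow.Fminus, Flow.Fminus,
      intervalIntegral.integral_interval_sub_left
        (li_ii (f.fout_li e) 0 b) (li_ii (f.fout_li e) 0 a)]
  -- (2) non-deficit
  have hz : 0 ≤ f.z e θ := by
    rcases lt_or_ge θ (N.τ e) with hlt | hge
    · rw [Flow.z, hFp0 _ (by linarith), hFm0 _ hlt.le]; norm_num
    · refine no_downcross (G := f.z e) ?_ ?_ ?_ hge
      · exact (hFp.comp (continuous_id.sub continuous_const)).sub hFm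
      · rw [Flow.z, sub_self, hFp0 0 le_rfl, hFm0 _ le_rfl]; norm_num
      · intro a b hla hab hneg
        have hpt : ∀ x ∈ Set.Ioo a b, f.fout e x ≤ f.fin e (x - N.τ e) := by
          intro x hx
          have hzx := hneg x hx
          have hxτ : ¬ x < N.τ e := not_lt.mpr (le_trans hla hx.1.le)
          have hb : f.bminus e x = min (f.fin e (x - N.τ e)) (N.νout e) := by
            rw [Flow.bminus, if_neg hxτ, if_neg (by linarith)]
          calc f.fout e x ≤ f.bminus e x := (hout_le x).1
            _ ≤ f.fin e (x - N.τ e) := by rw [hb]; exact min_le_left _ _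
        have hint : (∫ x in a..b, f.fout e x) ≤ ∫ x in a..b, f.fin e (x - N.τ e) := by
          refine integral_mono_Ioo hab (li_ii (f.fout_li e) a b) ?_ hpt
          simpa using (li_ii (f.fin_li e) (a - N.τ e) (b - N.τ e)).comp_sub_right (N.τ e)
        have h1 := hFp_sub a b
        have h2 := hFm_sub a b
        simp only [Flow.z]
        linarith
  refine ⟨(hout_le θ).2, hz, ?_⟩
  -- (3) storage
  have hbot : (⊥ : EReal) < N.σ e := lt_of_le_of_lt bot_le (N.σ_gt e)
  rcases eq_or_ne (N.σ e) ⊤ with htop | htop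
  · rw [htop]; exact le_top
  have hcoe : (((N.σ e).toReal : ℝ) : EReal) = N.σ e := EReal.coe_toReal htop hbot.ne'
  set s : ℝ := (N.σ e).toReal with hsdef
  have hs0 : 0 ≤ s := by
    have h := N.σ_gt e
    rw [← hcoe, EReal.coe_lt_coe_iff] at h
    nlinarith [N.νin_pos e, N.τ_nonneg e]
  rw [← hcoe, EReal.coe_le_coe_iff]
  have key : 0 ≤ s - f.d e θ := by
    refine no_downcross (G := fun ϑ => s - f.d e ϑ) ?_ ?_ ?_ hθ
    · exact continuous_const.sub (hFp.sub hFm)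
    · simp only [Flow.d, Flow.Fplus, Flow.Fminus, intervalIntegral.integral_same]
      linarith
    · intro a b hla hab hneg
      have hpt : ∀ x ∈ Set.Ioo a b, f.fin e x ≤ f.fout e x := by
        intro x hx
        have hdx := hneg x hx
        have hfull : f.Full e x := by
          rw [Flow.Full, ← hcoe, EReal.coe_le_coe_iff]
          simp only [sub_neg] at hdx
          linarith
        have hb : f.bplus e x = min (f.fout e x) (N.νin e) := by
          rw [Flow.bplus, if_pos hfull]
        calc f.fin e x ≤ f.bplus e x := hin e x
          _ ≤ f.fout e x := by rw [hb]; exact min_le_left _ _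
      have hint : (∫ x in a..b, f.fin e x) ≤ ∫ x in a..b, f.fout e x :=
        integral_mono_Ioo hab (li_ii (f.fin_li e) a b) (li_ii (f.fout_li e) a b) hpt
      have h1 : f.Fplus e b - f.Fplus e a = ∫ x in a..b, f.fin e x := by
        rw [Flow.Fplus, Flow.Fplus, intervalIntegral.integral_interval_sub_left
          (li_ii (f.fin_li e) 0 b) (li_ii (f.fin_li e) 0 a)]
      have h2 := hFm_sub a b
      simp only [Flow.d]
      linarith
  linarith

end SpillbackNetwork
end

section
/- Let I be a nonempty finite set (the arcs into a node v), let ν_i > 0 be outflow capacities and b_i ∈ [0, ν_i] push rates for i ∈ I, and let Ω > 0 satisfy Σ_{i∈I} b_i ≥ Ω. Then: (1) there exists c ∈ (0,1] such that Σ_{i∈I} min{b_i, c·ν_i} = Ω, and the set of such c is compact, so it has a maximal element c*; (2) the family of outflow rates g_i = min{b_i, c·ν_i} is the same for every c ∈ (0,1] with Σ_{i∈I} min{b_i, c·ν_i} = Ω; in particular the outflow rates satisfying flow conservation (Σ_i g_i = Ω) and the fair allocation condition (g_i = min{b_i, c·ν_i} for some c ∈ (0,1]) are unique. -/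
/-! The total outflow `F c = Σ min (b i) (c ν i)` is continuous and nondecreasing in `c`, with
`F 0 = 0 < Ω ≤ Σ b i = F 1`; the intermediate value theorem gives a solution of `F c = Ω` in
`(0, 1]`, and since `F 0 ≠ Ω` the solution set is the closed subset `F ⁻¹' {Ω}` of `[0, 1]`.
For two solutions `c ≤ c'` every summand is nondecreasing from `c` to `c'` while the sums agree,
so no summand can increase: the outflow rates do not depend on the solution. -/

open Finset

theorem apply_eq_of_monotone_of_sum_eq {ι α M : Type*} [Fintype ι] [LinearOrder α]
    [AddCommMonoid M] [PartialOrder M] [IsOrderedCancelAddMonoid M]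
    {f : ι → α → M} (hf : ∀ i, Monotone (f i)) {x y : α}
    (h : ∑ i, f i x = ∑ i, f i y) (i : ι) : f i x = f i y := by
  wlog hxy : x ≤ y generalizing x y
  · exact (this h.symm (le_of_not_ge hxy)).symm
  exact (sum_eq_sum_iff_of_le fun j _ => hf j hxy).1 h i (mem_univ i)

theorem isCompact_setOf_mem_Ioc_and_eq {α β : Type*} [LinearOrder α] [TopologicalSpace α]
    [CompactIccSpace α] [TopologicalSpace β] [T1Space β] {f : α → β} (hf : Continuous f)
    {a b : α} {y : β} (ha : f a ≠ y) : IsCompact {x | x ∈ Set.Ioc a b ∧ f x = y} := by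
  have hset : {x | x ∈ Set.Ioc a b ∧ f x = y} = Set.Icc a b ∩ f ⁻¹' {y} := by
    ext x
    constructor
    · rintro ⟨hx, hfx⟩
      exact ⟨Set.Ioc_subset_Icc_self hx, hfx⟩
    · rintro ⟨hx, hfx⟩
      exact ⟨⟨hx.1.lt_of_ne (by rintro rfl; exact ha hfx), hx.2⟩, hfx⟩
  rw [hset]
  exact isCompact_Icc.inter_right (isClosed_singleton.preimage hf)

section TotalOutflow

variable {ι : Type*} [Fintype ι]

def totalOutflow (b ν : ι → ℝ) (c : ℝ) : ℝ :=
  ∑ i, min (b i) (c * ν i)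

theorem continuous_totalOutflow (b ν : ι → ℝ) : Continuous (totalOutflow b ν) :=
  continuous_finsetSum _ fun _ _ => continuous_const.min (continuous_id.mul continuous_const)

theorem totalOutflow_zero {b : ι → ℝ} (hb : ∀ i, 0 ≤ b i) (ν : ι → ℝ) :
    totalOutflow b ν 0 = 0 :=
  sum_eq_zero fun i _ => by rw [zero_mul, min_eq_right (hb i)]

theorem totalOutflow_one {b ν : ι → ℝ} (hbν : ∀ i, b i ≤ ν i) :
    totalOutflow b ν 1 = ∑ i, b i :=
  sum_congr rfl fun i _ => by rw [one_mul, min_eq_left (hbν i)]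

theorem exists_mem_Ioc_totalOutflow_eq {b ν : ι → ℝ} (hb : ∀ i, 0 ≤ b i ∧ b i ≤ ν i)
    {Ω : ℝ} (hΩ : 0 < Ω) (hsum : Ω ≤ ∑ i, b i) :
    ∃ c ∈ Set.Ioc (0 : ℝ) 1, totalOutflow b ν c = Ω := by
  have hΩ_mem : Ω ∈ Set.Ioc (totalOutflow b ν 0) (totalOutflow b ν 1) := by
    rw [totalOutflow_zero (fun i => (hb i).1), totalOutflow_one (fun i => (hb i).2)]
    exact ⟨hΩ, hsum⟩
  exact intermediate_value_Ioc zero_le_one (continuous_totalOutflow b ν).continuousOn hΩ_mem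

theorem min_mul_eq_of_totalOutflow_eq {b ν : ι → ℝ} (hν : ∀ i, 0 ≤ ν i) {c c' : ℝ}
    (h : totalOutflow b ν c = totalOutflow b ν c') (i : ι) :
    min (b i) (c * ν i) = min (b i) (c' * ν i) :=
  apply_eq_of_monotone_of_sum_eq (f := fun i c => min (b i) (c * ν i))
    (fun i => monotone_const.min (monotone_id.mul_const (hν i))) h i

end TotalOutflow

theorem fair_allocation_exists_unique_general
    {I : Type} [Fintype I]
    (ν b : I → ℝ) (hν : ∀ i, 0 < ν i) (hb : ∀ i, 0 ≤ b i ∧ b i ≤ ν i)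
    (Ω : ℝ) (hΩ : 0 < Ω) (hsum : Ω ≤ ∑ i, b i) :
    ({c : ℝ | c ∈ Set.Ioc (0:ℝ) 1 ∧ (∑ i, min (b i) (c * ν i)) = Ω}.Nonempty ∧
     IsCompact {c : ℝ | c ∈ Set.Ioc (0:ℝ) 1 ∧ (∑ i, min (b i) (c * ν i)) = Ω} ∧
     ∃ cmax, IsGreatest {c : ℝ | c ∈ Set.Ioc (0:ℝ) 1 ∧
        (∑ i, min (b i) (c * ν i)) = Ω} cmax) ∧
    (∀ c c', (c ∈ Set.Ioc (0:ℝ) 1 ∧ (∑ i, min (b i) (c * ν i)) = Ω) →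
      (c' ∈ Set.Ioc (0:ℝ) 1 ∧ (∑ i, min (b i) (c' * ν i)) = Ω) →
      ∀ i, min (b i) (c * ν i) = min (b i) (c' * ν i)) ∧
    (∀ g g' : I → ℝ,
      ((∑ i, g i) = Ω ∧ ∃ c ∈ Set.Ioc (0:ℝ) 1, ∀ i, g i = min (b i) (c * ν i)) →
      ((∑ i, g' i) = Ω ∧ ∃ c ∈ Set.Ioc (0:ℝ) 1, ∀ i, g' i = min (b i) (c * ν i)) →
      g = g') := by
  have hne : {c : ℝ | c ∈ Set.Ioc (0:ℝ) 1 ∧ totalOutflow b ν c = Ω}.Nonempty :=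
    exists_mem_Ioc_totalOutflow_eq hb hΩ hsum
  have hcompact : IsCompact {c : ℝ | c ∈ Set.Ioc (0:ℝ) 1 ∧ totalOutflow b ν c = Ω} :=
    isCompact_setOf_mem_Ioc_and_eq (continuous_totalOutflow b ν)
      (by rw [totalOutflow_zero (fun i => (hb i).1)]; exact hΩ.ne)
  have huniq : ∀ c c', (c ∈ Set.Ioc (0:ℝ) 1 ∧ totalOutflow b ν c = Ω) →
      (c' ∈ Set.Ioc (0:ℝ) 1 ∧ totalOutflow b ν c' = Ω) →
      ∀ i, min (b i) (c * ν i) = min (b i) (c' * ν i) := fun c c' hc hc' =>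
    min_mul_eq_of_totalOutflow_eq (fun i => (hν i).le) (hc.2.trans hc'.2.symm)
  refine ⟨⟨hne, hcompact, hcompact.exists_isGreatest hne⟩, huniq, ?_⟩
  rintro g g' ⟨hg, c, hc, hgc⟩ ⟨hg', c', hc', hgc'⟩
  obtain rfl : g = fun i => min (b i) (c * ν i) := funext hgc
  obtain rfl : g' = fun i => min (b i) (c' * ν i) := funext hgc'
  exact funext (huniq c c' ⟨hc, hg⟩ ⟨hc', hg'⟩)

/-- **Existence and uniqueness of fairly allocated outflow rates.**
Let `I` be the (nonempty, finite) set of arcs into a node, `ν i > 0` the outflow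
capacities, `b i ∈ [0, ν i]` the push rates, and `Ω > 0` with `Σ b i ≥ Ω`.  Then
(1) some `c ∈ (0,1]` satisfies `Σ min(b i, c·ν i) = Ω`, the set of such `c` is
compact and has a maximal element; (2) the outflow rates `g i = min(b i, c·ν i)`
are the same for all such `c`; in particular the family of outflow rates
satisfying flow conservation and the fair allocation condition is unique. -/
theorem fair_allocation_exists_unique
    {I : Type} [Fintype I] [Nonempty I]
    (ν b : I → ℝ) (hν : ∀ i, 0 < ν i) (hb : ∀ i, 0 ≤ b i ∧ b i ≤ ν i)
    (Ω : ℝ) (hΩ : 0 < Ω) (hsum : Ω ≤ ∑ i, b i) :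
    ({c : ℝ | c ∈ Set.Ioc (0:ℝ) 1 ∧ (∑ i, min (b i) (c * ν i)) = Ω}.Nonempty ∧
     IsCompact {c : ℝ | c ∈ Set.Ioc (0:ℝ) 1 ∧ (∑ i, min (b i) (c * ν i)) = Ω} ∧
     ∃ cmax, IsGreatest {c : ℝ | c ∈ Set.Ioc (0:ℝ) 1 ∧
        (∑ i, min (b i) (c * ν i)) = Ω} cmax) ∧
    (∀ c c', (c ∈ Set.Ioc (0:ℝ) 1 ∧ (∑ i, min (b i) (c * ν i)) = Ω) →
      (c' ∈ Set.Ioc (0:ℝ) 1 ∧ (∑ i, min (b i) (c' * ν i)) = Ω) →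
      ∀ i, min (b i) (c * ν i) = min (b i) (c' * ν i)) ∧
    (∀ g g' : I → ℝ,
      ((∑ i, g i) = Ω ∧ ∃ c ∈ Set.Ioc (0:ℝ) 1, ∀ i, g i = min (b i) (c * ν i)) →
      ((∑ i, g' i) = Ω ∧ ∃ c ∈ Set.Ioc (0:ℝ) 1, ∀ i, g' i = min (b i) (c * ν i)) →
      g = g') :=
  fair_allocation_exists_unique_general ν b hν hb Ω hΩ hsum
end

section
/- Consider a single arc as in the context. Then F⁺(θ) = F⁻(T(θ)) for all θ ≥ 0. -/
open MeasureTheory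
open scoped Classical

noncomputable section

/-- Cumulative flow `F(θ) = ∫₀^θ f` (which vanishes for `θ < 0` whenever `f`
vanishes on negatives). -/
def Fcum (f : ℝ → ℝ) (θ : ℝ) : ℝ := ∫ ξ in (0:ℝ)..θ, f ξ

/-- The queue `z(θ) = F⁺(θ − τ) − F⁻(θ)`. -/
def queueLen (τ : ℝ) (fplus fminus : ℝ → ℝ) (θ : ℝ) : ℝ :=
  Fcum fplus (θ - τ) - Fcum fminus θ

/-- A single arc of a feasible flow over time: transit time `τ ≥ 0`, outflow
capacity `ν > 0`, inflow rate `fplus` and outflow rate `fminus` (locally integrable,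
bounded, nonnegative, vanishing on negative times) with `fminus ≤ ν`, nonnegative
queues, and a lower bound `ε > 0` for the outflow rate whenever the queue is
positive (so that the waiting time is well-defined). -/
structure Arc where
  τ : ℝ
  ν : ℝ
  ε : ℝ
  fplus : ℝ → ℝ
  fminus : ℝ → ℝ
  τ_nonneg : 0 ≤ τ
  ν_pos : 0 < ν
  ε_pos : 0 < ε
  fplus_nonneg : ∀ θ, 0 ≤ fplus θ
  fminus_nonneg : ∀ θ, 0 ≤ fminus θ
  fplus_zero_neg : ∀ θ, θ < 0 → fplus θ = 0
  fminus_zero_neg : ∀ θ, θ < 0 → fminus θ = 0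
  fplus_bdd : ∃ M, ∀ θ, fplus θ ≤ M
  fplus_li : LocallyIntegrable fplus
  fminus_li : LocallyIntegrable fminus
  fminus_le_cap : ∀ θ, fminus θ ≤ ν
  queue_nonneg : ∀ θ, 0 ≤ θ → 0 ≤ queueLen τ fplus fminus θ
  outflow_lb : ∀ θ, 0 < queueLen τ fplus fminus θ → ε ≤ fminus θ

namespace Arc

/-- Cumulative inflow `F⁺`. -/
def Fplus (A : Arc) (θ : ℝ) : ℝ := Fcum A.fplus θ

/-- Cumulative outflow `F⁻`. -/
def Fminus (A : Arc) (θ : ℝ) : ℝ := Fcum A.fminus θ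

/-- The queue `z`. -/
def z (A : Arc) (θ : ℝ) : ℝ := queueLen A.τ A.fplus A.fminus θ

/-- The waiting time `q(θ)`. -/
def q (A : Arc) (θ : ℝ) : ℝ :=
  sInf {q : ℝ | 0 ≤ q ∧
    (∫ ξ in (θ + A.τ)..(θ + A.τ + q), A.fminus ξ) = A.z (θ + A.τ)}

/-- The exit time `T(θ) = θ + τ + q(θ)`. -/
def T (A : Arc) (θ : ℝ) : ℝ := θ + A.τ + A.q θ

end Arc

end

/-- **FIFO identity.** For a single arc of a feasible flow over time,
`F⁺(θ) = F⁻(T(θ))` for all `θ ≥ 0`. -/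
theorem arc_fifo (A : Arc) (θ : ℝ) (hθ : 0 ≤ θ) :
    A.Fplus θ = A.Fminus (A.T θ) := by
  have hII : ∀ b c : ℝ, IntervalIntegrable A.fminus MeasureTheory.volume b c :=
    fun b c => (A.fminus_li.integrableOn_isCompact isCompact_uIcc).intervalIntegrable
  have hIIp : ∀ b c : ℝ, IntervalIntegrable A.fplus MeasureTheory.volume b c :=
    fun b c => (A.fplus_li.integrableOn_isCompact isCompact_uIcc).intervalIntegrable
  set a := θ + A.τ with ha
  have ha0 : 0 ≤ a := add_nonneg hθ A.τ_nonneg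
  set g : ℝ → ℝ := fun t => ∫ ξ in a..(a + t), A.fminus ξ with hgdef
  have hgcont : Continuous g := by
    have h := intervalIntegral.continuous_primitive (fun b c => hII b c) a
    exact h.comp (continuous_const.add continuous_id)
  have hsplit : ∀ s t : ℝ, g t = g s + ∫ ξ in (a + s)..(a + t), A.fminus ξ := by
    intro s t
    rw [hgdef]
    exact (intervalIntegral.integral_add_adjacent_intervals (hII a (a + s))
      (hII (a + s) (a + t))).symm
  have hgmono : Monotone g := by
    intro s t hst
    rw [hsplit s t]
    have : 0 ≤ ∫ ξ in (a + s)..(a + t), A.fminus ξ :=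
      intervalIntegral.integral_nonneg (by linarith) (fun x _ => A.fminus_nonneg x)
    linarith
  have hFsplit : ∀ t : ℝ, Fcum A.fminus (a + t) = Fcum A.fminus a + g t := by
    intro t
    rw [Fcum, Fcum, hgdef]
    exact (intervalIntegral.integral_add_adjacent_intervals (hII 0 a) (hII a (a + t))).symm
  have hFpmono : Monotone (Fcum A.fplus) := by
    intro s t hst
    have : Fcum A.fplus t - Fcum A.fplus s = ∫ ξ in s..t, A.fplus ξ := by
      rw [Fcum, Fcum]
      rw [← intervalIntegral.integral_add_adjacent_intervals (hIIp 0 s) (hIIp s t)]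
      ring
    have h2 : 0 ≤ ∫ ξ in s..t, A.fplus ξ :=
      intervalIntegral.integral_nonneg hst (fun x _ => A.fplus_nonneg x)
    linarith
  set z0 := A.z a with hz0def
  have hz0eq : z0 = Fcum A.fplus θ - Fcum A.fminus a := by
    rw [hz0def, Arc.z, queueLen]
    congr 1
    rw [ha]
    ring_nf
  have hz0 : 0 ≤ z0 := A.queue_nonneg a ha0
  -- lower bound on the queue at time a + t
  have hqueue_lb : ∀ t : ℝ, 0 ≤ t → z0 - g t ≤ A.z (a + t) := by
    intro t ht
    have hzat : A.z (a + t) = Fcum A.fplus (θ + t) - (Fcum A.fminus a + g t) := by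
      rw [Arc.z, queueLen, ← hFsplit t]
      congr 2
      rw [ha]; ring
    have hmono : Fcum A.fplus θ ≤ Fcum A.fplus (θ + t) := hFpmono (by linarith)
    rw [hzat, hz0eq]
    linarith
  -- reachability: g (z0 / ε) is at least z0
  set q0 := z0 / A.ε with hq0def
  have hq0 : 0 ≤ q0 := div_nonneg hz0 A.ε_pos.le
  have hreach : z0 ≤ g q0 := by
    by_contra h
    push_neg at h
    have hlb : ∀ x ∈ Set.Icc a (a + q0), A.ε ≤ A.fminus x := by
      intro x hx
      have ht0 : 0 ≤ x - a := by linarith [hx.1]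
      have hgx : g (x - a) ≤ g q0 := hgmono (by linarith [hx.2])
      have hpos : 0 < A.z (a + (x - a)) := by
        have := hqueue_lb (x - a) ht0
        linarith
      have := A.outflow_lb (a + (x - a)) hpos
      simpa using this
    have hge : A.ε * q0 ≤ g q0 := by
      have h1 : (∫ _ in a..(a + q0), A.ε) ≤ ∫ ξ in a..(a + q0), A.fminus ξ := by
        apply intervalIntegral.integral_mono_on (by linarith)
          (intervalIntegrable_const) (hII a (a + q0))
        intro x hx; exact hlb x hx
      rw [intervalIntegral.integral_const] at h1
      simpa [mul_comm] using h1
    have : A.ε * q0 = z0 := by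
      rw [hq0def, mul_comm, div_mul_cancel₀ _ A.ε_pos.ne']
    linarith
  -- intermediate value: there is q* with g q* = z0
  have hivt : z0 ∈ g '' Set.Icc 0 q0 := by
    apply intermediate_value_Icc hq0 hgcont.continuousOn
    constructor
    · simpa [hgdef] using hz0
    · exact hreach
  obtain ⟨qstar, hqstar_mem, hqstar⟩ := hivt
  -- the defining set of q(θ)
  set S : Set ℝ := {q : ℝ | 0 ≤ q ∧
    (∫ ξ in (θ + A.τ)..(θ + A.τ + q), A.fminus ξ) = A.z (θ + A.τ)} with hSdef
  have hSg : S = {q : ℝ | 0 ≤ q ∧ g q = z0} := rfl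
  have hSclosed : IsClosed S := by
    rw [hSg]
    exact (isClosed_le continuous_const continuous_id).inter
      (isClosed_eq hgcont continuous_const)
  have hSne : S.Nonempty := by
    refine ⟨qstar, ?_⟩
    rw [hSg]
    exact ⟨hqstar_mem.1, hqstar⟩
  have hSbdd : BddBelow S := ⟨0, fun x hx => hx.1⟩
  have hmem : sInf S ∈ S := hSclosed.csInf_mem hSne hSbdd
  have hqθ : A.q θ = sInf S := rfl
  rw [hSg] at hmem
  obtain ⟨hq_nonneg, hq_eq⟩ := hmem
  have hT : A.T θ = a + sInf S := by
    rw [Arc.T, hqθ, ha]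
  rw [hT, Arc.Fminus, hFsplit (sInf S), hq_eq, hz0eq, Arc.Fplus]
  ring
end

section
/- Consider a single arc as in the context. For all 0 ≤ θ₁ < θ₂ with F⁺(θ₂) − F⁺(θ₁) = 0 and z(θ₂ + τ) > 0, one has T(θ₁) = T(θ₂); more precisely, q(θ₁) = q(θ₂) + θ₂ − θ₁. -/
open MeasureTheory
open scoped Classical

/-! The exit time `θ + τ + q(θ)` is the first time `t ≥ θ + τ` at which the
cumulative outflow `F⁻(t)` reaches the level `F⁺(θ)`. Without inflow on `[θ₁, θ₂]` both
exit times are first hitting times of the same level, and since `z(θ₂ + τ) > 0` the monotone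
`F⁻` is still below that level on `[θ₁ + τ, θ₂ + τ]`, so the two hitting problems have the
same solutions. The outflow bound `ε` makes the level reachable at all, which is what lets
the infimum commute with the shift by `θ₂ - θ₁`. -/

open Set

theorem csInf_image_const_add {α : Type*} [ConditionallyCompleteLattice α] [AddGroup α]
    [AddLeftMono α] {s : Set α} (c : α) (hs : s.Nonempty) (hb : BddBelow s) :
    sInf ((c + ·) '' s) = c + sInf s :=
  ((OrderIso.addLeft c).map_csInf' hs hb).symm

section Fcum

variable {f : ℝ → ℝ}

theorem MeasureTheory.LocallyIntegrable.intervalIntegrable (hf : LocallyIntegrable f)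
    (u v : ℝ) : IntervalIntegrable f volume u v :=
  (hf.integrableOn_isCompact isCompact_uIcc).intervalIntegrable

theorem Fcum_sub_Fcum (hf : LocallyIntegrable f) (u v : ℝ) :
    Fcum f v - Fcum f u = ∫ ξ in u..v, f ξ :=
  intervalIntegral.integral_interval_sub_left (hf.intervalIntegrable 0 v)
    (hf.intervalIntegrable 0 u)

theorem continuous_Fcum (hf : LocallyIntegrable f) : Continuous (Fcum f) :=
  intervalIntegral.continuous_primitive hf.intervalIntegrable 0

theorem monotone_Fcum (hf : LocallyIntegrable f) (hf₀ : ∀ x, 0 ≤ f x) : Monotone (Fcum f) :=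
  fun u v huv => sub_nonneg.1 <| (Fcum_sub_Fcum hf u v).symm ▸
    intervalIntegral.integral_nonneg huv fun x _ => hf₀ x

theorem exists_Fcum_eq_of_le_rate (hf : LocallyIntegrable f) (hf₀ : ∀ x, 0 ≤ f x)
    {a c ε : ℝ} (hε : 0 < ε) (ha : Fcum f a ≤ c)
    (hrate : ∀ x, a ≤ x → Fcum f x < c → ε ≤ f x) :
    ∃ t, a ≤ t ∧ Fcum f t = c := by
  -- at rate `ε` the missing amount `c - F(a)` is supplied by time `w`
  set w := a + (c - Fcum f a) / ε
  have haw : a ≤ w := le_add_of_nonneg_right (div_nonneg (sub_nonneg.2 ha) hε.le)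
  have hw : c ≤ Fcum f w := by
    by_contra! hw
    have hint : (w - a) * ε ≤ Fcum f w - Fcum f a := by
      rw [Fcum_sub_Fcum hf, ← smul_eq_mul, ← intervalIntegral.integral_const]
      exact intervalIntegral.integral_mono_on haw intervalIntegrable_const
        (hf.intervalIntegrable a w) fun x hx =>
          hrate x hx.1 ((monotone_Fcum hf hf₀ hx.2).trans_lt hw)
    have hεw : (w - a) * ε = c - Fcum f a := by
      simp only [w, add_sub_cancel_left]
      field_simp
    linarith
  obtain ⟨t, ht, hFt⟩ := intermediate_value_Icc haw (continuous_Fcum hf).continuousOn ⟨ha, hw⟩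
  exact ⟨t, ht.1, hFt⟩

end Fcum

namespace Arc

variable (A : Arc)

def waitingSet (θ : ℝ) : Set ℝ :=
  {q : ℝ | 0 ≤ q ∧ (∫ ξ in (θ + A.τ)..(θ + A.τ + q), A.fminus ξ) = A.z (θ + A.τ)}

theorem q_eq_sInf_waitingSet (θ : ℝ) : A.q θ = sInf (A.waitingSet θ) := rfl

theorem z_eq (x : ℝ) : A.z x = A.Fplus (x - A.τ) - A.Fminus x := rfl

theorem monotone_Fplus : Monotone A.Fplus := monotone_Fcum A.fplus_li A.fplus_nonneg

theorem monotone_Fminus : Monotone A.Fminus := monotone_Fcum A.fminus_li A.fminus_nonneg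

theorem mem_waitingSet_iff {θ q : ℝ} :
    q ∈ A.waitingSet θ ↔ 0 ≤ q ∧ A.Fminus (θ + A.τ + q) = A.Fplus θ := by
  rw [waitingSet, mem_ofPred_eq, ← Fcum_sub_Fcum A.fminus_li, z_eq, add_sub_cancel_right]
  simp only [Fminus, sub_left_inj]

theorem waitingSet_nonempty {θ : ℝ} (hz : 0 ≤ A.z (θ + A.τ)) :
    (A.waitingSet θ).Nonempty := by
  rw [z_eq, add_sub_cancel_right, sub_nonneg] at hz
  have hrate : ∀ x, θ + A.τ ≤ x → A.Fminus x < A.Fplus θ → A.ε ≤ A.fminus x :=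
    fun x hx hlt => A.outflow_lb x <| sub_pos.2 <|
      hlt.trans_le <| A.monotone_Fplus (le_sub_iff_add_le.2 hx)
  obtain ⟨t, ht, hFt⟩ :=
    exists_Fcum_eq_of_le_rate A.fminus_li A.fminus_nonneg A.ε_pos hz hrate
  exact ⟨t - (θ + A.τ), A.mem_waitingSet_iff.2 ⟨sub_nonneg.2 ht, by rwa [add_sub_cancel]⟩⟩

theorem waitingSet_eq_image_add {θ₁ θ₂ : ℝ} (h12 : θ₁ ≤ θ₂) (hF : A.Fplus θ₁ = A.Fplus θ₂)
    (hz : 0 < A.z (θ₂ + A.τ)) :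
    A.waitingSet θ₁ = (θ₂ - θ₁ + ·) '' A.waitingSet θ₂ := by
  rw [z_eq, add_sub_cancel_right, sub_pos] at hz
  ext q
  simp only [mem_image, mem_waitingSet_iff]
  constructor
  · rintro ⟨hq, hFq⟩
    refine ⟨q - (θ₂ - θ₁), ⟨?_, ?_⟩, add_sub_cancel _ _⟩
    · by_contra! hlt
      have := A.monotone_Fminus (show θ₁ + A.τ + q ≤ θ₂ + A.τ by linarith)
      linarith
    · rw [← hF, ← hFq]
      congr 1
      ring
  · rintro ⟨p, ⟨hp, hFp⟩, rfl⟩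
    refine ⟨by linarith, ?_⟩
    rw [hF, ← hFp]
    congr 1
    ring

end Arc

theorem arc_equal_exit_times_general (A : Arc) (θ₁ θ₂ : ℝ)
    (h12 : θ₁ < θ₂)
    (hF : A.Fplus θ₂ - A.Fplus θ₁ = 0)
    (hz : 0 < A.z (θ₂ + A.τ)) :
    A.q θ₁ = A.q θ₂ + θ₂ - θ₁ ∧ A.T θ₁ = A.T θ₂ := by
  have hq : A.q θ₁ = A.q θ₂ + θ₂ - θ₁ := by
    rw [Arc.q_eq_sInf_waitingSet, Arc.q_eq_sInf_waitingSet,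
      A.waitingSet_eq_image_add h12.le (sub_eq_zero.1 hF).symm hz,
      csInf_image_const_add _ (A.waitingSet_nonempty hz.le) ⟨0, fun _ hq => hq.1⟩]
    ring
  refine ⟨hq, ?_⟩
  simp only [Arc.T, hq]
  ring

/-- **Equal exit times without intermediate inflow.** For a single arc of a feasible
flow over time and all `0 ≤ θ₁ < θ₂` with `F⁺(θ₂) − F⁺(θ₁) = 0` and `z(θ₂ + τ) > 0`,
one has `q(θ₁) = q(θ₂) + θ₂ − θ₁`, and in particular `T(θ₁) = T(θ₂)`. -/
theorem arc_equal_exit_times (A : Arc) (θ₁ θ₂ : ℝ)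
    (h1 : 0 ≤ θ₁) (h12 : θ₁ < θ₂)
    (hF : A.Fplus θ₂ - A.Fplus θ₁ = 0)
    (hz : 0 < A.z (θ₂ + A.τ)) :
    A.q θ₁ = A.q θ₂ + θ₂ - θ₁ ∧ A.T θ₁ = A.T θ₂ :=
  arc_equal_exit_times_general A θ₁ θ₂ h12 hF hz
end
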